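/- If a differentiable function V : ℝ → ℝ and a function z : ℝ → ℝ^k satisfy λ₁‖z(t)‖² ≤ V(t) ≤ λ₂‖z(t)‖² and V'(t) ≤ -λ₃‖z(t)‖² for positive constants λ₁ ≤ λ₂ and λ₃ > 0, then ‖z(t)‖ ≤ √(λ₂/λ₁) ‖z(0)‖ exp(-(λ₃/(2λ₂)) t) for all t ≥ 0. -/

import Mathlib

/-! The upper bound turns `V' ≤ -λ₃‖z‖²` into `V' ≤ -(λ₃/λ₂) V`, so by Grönwall
`V t ≤ V 0 · exp(-(λ₃/λ₂) t)`; the two quadratic bounds on `V` then transfer this decay to `‖z‖²`. -/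

open Real Set

theorem le_mul_exp_of_deriv_le_mul {f : ℝ → ℝ} {K a : ℝ} (hf : Differentiable ℝ f)
    (bound : ∀ t ≥ a, deriv f t ≤ K * f t) :
    ∀ t ≥ a, f t ≤ f a * exp (K * (t - a)) := by
  intro t ht
  have hgronwall := le_gronwallBound_of_liminf_deriv_right_le (f' := deriv f) (ε := 0)
    hf.continuous.continuousOn
    (fun x _ _ hr => (hf x).hasDerivAt.hasDerivWithinAt.liminf_right_slope_le hr)
    le_rfl (fun x hx => by simpa using bound x hx.1) t ⟨ht, le_rfl⟩
  rwa [gronwallBound_ε0] at hgronwall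

theorem le_sqrt_mul_mul_exp_of_sq_le {x c a b s : ℝ} (hc : 0 ≤ c) (ha : 0 < a)
    (hb : 0 ≤ b) (h : a * x ^ 2 ≤ c * b ^ 2 * exp (2 * s)) :
    x ≤ √(c / a) * b * exp s := by
  refine le_of_pow_le_pow_left₀ two_ne_zero (by positivity) ?_
  have hsq : (√(c / a) * b * exp s) ^ 2 = c * b ^ 2 * exp (2 * s) / a := by
    rw [mul_pow, mul_pow, sq_sqrt (by positivity), ← exp_nat_mul]
    push_cast
    ring
  rw [hsq, le_div_iff₀ ha]
  linarith

theorem exponential_convergence {k : ℕ}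
    (lam1 lam2 lam3 : ℝ) (h1 : 0 < lam1) (h2 : lam1 ≤ lam2) (h3 : 0 < lam3)
    (V : ℝ → ℝ) (z : ℝ → EuclideanSpace ℝ (Fin k))
    (hV : Differentiable ℝ V)
    (hlow : ∀ t ≥ 0, lam1 * ‖z t‖ ^ 2 ≤ V t)
    (hup : ∀ t ≥ 0, V t ≤ lam2 * ‖z t‖ ^ 2)
    (hder : ∀ t ≥ 0, deriv V t ≤ -lam3 * ‖z t‖ ^ 2) :
    ∀ t ≥ 0, ‖z t‖ ≤ Real.sqrt (lam2 / lam1) * ‖z 0‖ * Real.exp (-(lam3 / (2 * lam2)) * t) := by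
  intro t ht
  have hlam2 : 0 < lam2 := h1.trans_le h2
  have hdecay : ∀ s ≥ 0, deriv V s ≤ -(lam3 / lam2) * V s := fun s hs => calc
    deriv V s ≤ -lam3 * ‖z s‖ ^ 2 := hder s hs
    _ ≤ -(lam3 / lam2) * V s := by
      rw [neg_mul, neg_mul, neg_le_neg_iff, div_mul_eq_mul_div, div_le_iff₀ hlam2]
      linarith [mul_le_mul_of_nonneg_left (hup s hs) h3.le]
  refine le_sqrt_mul_mul_exp_of_sq_le hlam2.le h1 (norm_nonneg _) ?_
  calc lam1 * ‖z t‖ ^ 2 ≤ V t := hlow t ht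
    _ ≤ V 0 * exp (-(lam3 / lam2) * (t - 0)) := le_mul_exp_of_deriv_le_mul hV hdecay t ht
    _ ≤ lam2 * ‖z 0‖ ^ 2 * exp (2 * (-(lam3 / (2 * lam2)) * t)) := by
      rw [sub_zero, show 2 * (-(lam3 / (2 * lam2)) * t) = -(lam3 / lam2) * t by field_simp]
      gcongr
      exact hup 0 le_rfl
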